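/- In the setting of the streak selection bias with τ drawn uniformly from I_k(X): for any non-terminal trial t with k+1 ≤ t ≤ n−1, P(X_t = 1 | τ = t, I_k(X) ≠ ∅) < p. -/

import Mathlib

open Finset

/-- Probability weight of a Bernoulli(p) binary sequence. -/
def wgt {n : ℕ} (p : ℝ) (x : Fin n → Bool) : ℝ :=
  ∏ i, if x i then p else 1 - p

/-- The set of trials that immediately follow `k` consecutive successes. -/
def streakSet {n : ℕ} (k : ℕ) (x : Fin n → Bool) : Finset (Fin n) :=
  Finset.univ.filter (fun i : Fin n =>
    k ≤ i.val ∧ ∀ j : Fin n, i.val - k ≤ j.val → j.val < i.val → x j = true)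

/-- The proportion of successes on the trials that immediately follow `k`
consecutive successes. -/
noncomputable def phat {n : ℕ} (k : ℕ) (x : Fin n → Bool) : ℝ :=
  (∑ i ∈ streakSet k x, if x i then (1:ℝ) else 0) / ((streakSet k x).card : ℝ)

/-- Number of successes in the sequence. -/
def ones {n : ℕ} (x : Fin n → Bool) : ℕ :=
  (Finset.univ.filter (fun i => x i = true)).card

/-!
Pair each sequence `x` with `x t = 1` and a `k`-streak ending at `t - 1` with the sequence `x'`
obtained by setting `x t = 0`. The streak before `t` is untouched, so `t` stays eligible, and the
Bernoulli weights satisfy `(1 - p) w(x) = p w(x')`. But in `x` the trial `t + 1` is eligible too,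
while in `x'` it is not (as `k ≥ 1`), so `|I_k(x')| < |I_k(x)|`: the chance that `τ = t` is larger
for `x'`. Summing over the pairs gives `(1 - p) P(X_t = 1, τ = t) < p P(X_t = 0, τ = t)`, which is
the claim.
-/

open Function

lemma sum_ite_update_false {ι M : Type*} [Fintype ι] [DecidableEq ι] [AddCommMonoid M] (t : ι)
    (F : (ι → Bool) → M) :
    ∑ x : ι → Bool, (if x t = true then F (update x t false) else 0) =
      ∑ x : ι → Bool, if x t = false then F x else 0 := by
  have hflip : Involutive fun x : ι → Bool => update x t (!x t) := fun x => by simp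
  refine Fintype.sum_equiv (hflip.toPerm _) _ _ fun x => ?_
  cases hx : x t <;> simp [hx]

section

variable {n k : ℕ}

/-- The weight of the event `{X = x, τ = t}` when `t ∈ I_k(x)`. -/
noncomputable def selectionWeight (p : ℝ) (k : ℕ) (x : Fin n → Bool) : ℝ :=
  wgt p x / (streakSet k x).card

lemma wgt_pos {p : ℝ} (hp : 0 < p) (hp1 : p < 1) (x : Fin n → Bool) : 0 < wgt p x :=
  prod_pos fun i _ => by split <;> linarith

lemma wgt_update_false (p : ℝ) {x : Fin n → Bool} {t : Fin n} (hxt : x t = true) :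
    (1 - p) * wgt p x = p * wgt p (update x t false) := by
  have hrest : ∏ i ∈ univ.erase t, (if update x t false i then p else 1 - p) =
      ∏ i ∈ univ.erase t, (if x i then p else 1 - p) :=
    prod_congr rfl fun i hi => by rw [update_of_ne (ne_of_mem_erase hi)]
  rw [wgt, wgt, ← mul_prod_erase univ _ (mem_univ t), ← mul_prod_erase univ _ (mem_univ t), hrest]
  simp only [hxt, update_self, Bool.false_eq_true, if_true, if_false]
  ring

lemma mem_streakSet_update_self {x : Fin n → Bool} {t : Fin n} (c : Bool) :
    t ∈ streakSet k (update x t c) ↔ t ∈ streakSet k x := by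
  simp only [streakSet, mem_filter, mem_univ, true_and]
  refine and_congr_right fun _ => forall_congr' fun j => imp_congr_right fun _ =>
    imp_congr_right fun hj => ?_
  rw [update_of_ne (Fin.ne_of_val_ne hj.ne)]

lemma streakSet_mono {x y : Fin n → Bool} (h : ∀ j, x j = true → y j = true) :
    streakSet k x ⊆ streakSet k y := by
  intro i hi
  simp only [streakSet, mem_filter, mem_univ, true_and] at hi ⊢
  exact ⟨hi.1, fun j h1 h2 => h j (hi.2 j h1 h2)⟩

lemma succ_mem_streakSet {x : Fin n → Bool} {t : Fin n} (hts : t ∈ streakSet k x)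
    (hxt : x t = true) (htn : t.val + 1 < n) : (⟨t.val + 1, htn⟩ : Fin n) ∈ streakSet k x := by
  simp only [streakSet, mem_filter, mem_univ, true_and] at hts ⊢
  refine ⟨by omega, fun j h1 h2 => ?_⟩
  rcases Nat.lt_succ_iff_lt_or_eq.mp h2 with hj | hj
  · exact hts.2 j (by omega) hj
  · exact Fin.ext hj ▸ hxt

lemma succ_notMem_streakSet {x : Fin n → Bool} {t : Fin n} (hk : 1 ≤ k) (hxt : x t = false)
    (htn : t.val + 1 < n) : (⟨t.val + 1, htn⟩ : Fin n) ∉ streakSet k x := by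
  simp only [streakSet, mem_filter, mem_univ, true_and, not_and]
  intro _ h
  simpa [hxt] using h t (by omega) (by simp)

lemma card_streakSet_update_false_lt {x : Fin n → Bool} {t : Fin n} (hk : 1 ≤ k)
    (hts : t ∈ streakSet k x) (hxt : x t = true) (htn : t.val + 1 < n) :
    (streakSet k (update x t false)).card < (streakSet k x).card := by
  refine card_lt_card <|
    Finset.ssubset_iff_subset_ne.mpr ⟨streakSet_mono fun j hj => ?_, fun heq => ?_⟩
  · by_cases hjt : j = t
    · exact hjt ▸ hxt
    · rwa [update_of_ne hjt] at hj
  · exact succ_notMem_streakSet hk (update_self t false x) htn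
      (heq ▸ succ_mem_streakSet hts hxt htn)

lemma one_sub_mul_selectionWeight_lt {p : ℝ} (hp : 0 < p) (hp1 : p < 1) {x : Fin n → Bool}
    {t : Fin n} (hk : 1 ≤ k) (hts : t ∈ streakSet k x) (hxt : x t = true)
    (htn : t.val + 1 < n) :
    (1 - p) * selectionWeight p k x < p * selectionWeight p k (update x t false) := by
  have hts' : t ∈ streakSet k (update x t false) := (mem_streakSet_update_self false).mpr hts
  have hcard : (0 : ℝ) < (streakSet k (update x t false)).card := by
    exact_mod_cast card_pos.mpr ⟨t, hts'⟩
  rw [selectionWeight, selectionWeight, ← mul_div_assoc, ← mul_div_assoc, wgt_update_false p hxt]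
  exact div_lt_div_of_pos_left (mul_pos hp (wgt_pos hp hp1 _)) hcard
    (by exact_mod_cast card_streakSet_update_false_lt hk hts hxt htn)

lemma one_sub_mul_sum_success_lt_mul_sum_failure {p : ℝ} (hp : 0 < p) (hp1 : p < 1)
    (hk : 1 ≤ k) {t : Fin n} (ht : k ≤ t.val) (htn : t.val + 1 < n) :
    (1 - p) * (∑ x : Fin n → Bool,
        if t ∈ streakSet k x ∧ x t = true then selectionWeight p k x else 0) <
      p * ∑ x : Fin n → Bool,
        if t ∈ streakSet k x ∧ x t = false then selectionWeight p k x else 0 := by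
  have hall : t ∈ streakSet k (fun _ => true) := by simp [streakSet, ht]
  calc
    _ = ∑ x : Fin n → Bool,
        if x t = true then (if t ∈ streakSet k x then (1 - p) * selectionWeight p k x else 0)
        else 0 := by
      rw [mul_sum]
      refine sum_congr rfl fun x _ => ?_
      cases x t <;> simp
    _ < ∑ x : Fin n → Bool, if x t = true then
          (if t ∈ streakSet k (update x t false) then
            p * selectionWeight p k (update x t false) else 0) else 0 := by
      refine sum_lt_sum (fun x _ => ?_) ⟨fun _ => true, mem_univ _, ?_⟩
      · simp only [mem_streakSet_update_self]
        split_ifs with hxt hts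
        · exact (one_sub_mul_selectionWeight_lt hp hp1 hk hts hxt htn).le
        all_goals rfl
      · simpa only [if_true, mem_streakSet_update_self, hall] using
          one_sub_mul_selectionWeight_lt hp hp1 hk hall rfl htn
    _ = ∑ x : Fin n → Bool, if x t = false then
          (if t ∈ streakSet k x then p * selectionWeight p k x else 0) else 0 :=
      sum_ite_update_false t fun y => if t ∈ streakSet k y then p * selectionWeight p k y else 0
    _ = _ := by
      rw [mul_sum]
      refine sum_congr rfl fun x _ => ?_
      cases x t <;> simp

end

theorem stmt10_general (n k : ℕ) (hk : 1 ≤ k)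
    (p : ℝ) (hp : 0 < p) (hp1 : p < 1) (t : Fin n) (ht : k ≤ t.val) (ht2 : t.val < n - 1) :
    (∑ x : Fin n → Bool,
        if t ∈ streakSet k x ∧ x t = true then
          wgt p x / ((streakSet k x).card : ℝ) else 0) /
    (∑ x : Fin n → Bool,
        if t ∈ streakSet k x then wgt p x / ((streakSet k x).card : ℝ) else 0) < p := by
  change (∑ x, if t ∈ streakSet k x ∧ x t = true then selectionWeight p k x else 0) /
    (∑ x, if t ∈ streakSet k x then selectionWeight p k x else 0) < p
  set N := ∑ x : Fin n → Bool,
    if t ∈ streakSet k x ∧ x t = true then selectionWeight p k x else 0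
  set M := ∑ x : Fin n → Bool,
    if t ∈ streakSet k x ∧ x t = false then selectionWeight p k x else 0
  have hsplit : (∑ x, if t ∈ streakSet k x then selectionWeight p k x else 0) = N + M := by
    rw [← sum_add_distrib]
    refine sum_congr rfl fun x _ => ?_
    cases x t <;> simp
  have hN : 0 ≤ N := sum_nonneg fun x _ =>
    ite_nonneg (div_nonneg (wgt_pos hp hp1 x).le (Nat.cast_nonneg _)) le_rfl
  have hkey : (1 - p) * N < p * M :=
    one_sub_mul_sum_success_lt_mul_sum_failure hp hp1 hk ht (by omega)
  have hM : 0 < M :=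
    pos_of_mul_pos_right (hkey.trans_le' (mul_nonneg (sub_nonneg.2 hp1.le) hN)) hp.le
  rw [hsplit, div_lt_iff₀ (by linarith)]
  linarith

/-- At any non-terminal trial, the conditional probability of success given that it
was the selected trial is strictly less than p. -/
theorem stmt10 (n k : ℕ) (hn : 3 ≤ n) (hk : 1 ≤ k) (hk2 : k ≤ n - 2)
    (p : ℝ) (hp : 0 < p) (hp1 : p < 1) (t : Fin n) (ht : k ≤ t.val) (ht2 : t.val < n - 1) :
    (∑ x : Fin n → Bool,
        if t ∈ streakSet k x ∧ x t = true then
          wgt p x / ((streakSet k x).card : ℝ) else 0) /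
    (∑ x : Fin n → Bool,
        if t ∈ streakSet k x then wgt p x / ((streakSet k x).card : ℝ) else 0) < p :=
  stmt10_general n k hk p hp hp1 t ht ht2
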